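/- arXiv:0911.5128 — 5 statements merged into one kernel-verified Lean document; each statement's English description precedes it below -/
import Mathlib

section
/- If a ≠ b are real numbers and x is real, then there exist real numbers λ, μ with λ² + μ² = 1 and λμ(a − b) = x(λ² − μ²), and for such λ, μ the matrix D = [[−λ, iμ],[−iμ, λ]] satisfies D · [[ia, x],[−x, ib]] · D⁻¹ = [[i(aλ² + bμ² + 2xλμ), 0],[0, i(aμ² + bλ² − 2xλμ)]]. -/
open Matrix Complex

/-- If a ≠ b are real and x is real, then there exist real λ, μ with
λ² + μ² = 1 and λμ(a − b) = x(λ² − μ²); and for any such λ, μ the matrix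
`D = [[−λ, iμ],[−iμ, λ]]` conjugates `[[ia, x],[−x, ib]]` to the stated
purely imaginary diagonal matrix. -/
theorem conj_neq_diagonal (a b x : ℝ) (hab : a ≠ b) :
    (∃ l m : ℝ, l ^ 2 + m ^ 2 = 1 ∧ l * m * (a - b) = x * (l ^ 2 - m ^ 2)) ∧
    (∀ l m : ℝ, l ^ 2 + m ^ 2 = 1 → l * m * (a - b) = x * (l ^ 2 - m ^ 2) →
      !![-(l : ℂ), Complex.I * m; -(Complex.I * m), (l : ℂ)] *
        !![Complex.I * a, (x : ℂ); -(x : ℂ), Complex.I * b] *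
        (!![-(l : ℂ), Complex.I * m; -(Complex.I * m), (l : ℂ)])⁻¹ =
      !![Complex.I * ((a * l ^ 2 + b * m ^ 2 + 2 * x * l * m : ℝ) : ℂ), 0;
         0, Complex.I * ((a * m ^ 2 + b * l ^ 2 - 2 * x * l * m : ℝ) : ℂ)]) := by
  constructor
  · set y := 2 * x / (a - b) with hy
    have hab' : a - b ≠ 0 := sub_ne_zero.mpr hab
    have hcos : Real.cos (Real.arctan y) ≠ 0 := (Real.cos_arctan_pos y).ne'
    have h1 : Real.sin (Real.arctan y) = y * Real.cos (Real.arctan y) := by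
      have := Real.tan_arctan y
      rw [Real.tan_eq_sin_div_cos] at this
      field_simp at this
      linarith
    refine ⟨Real.cos (Real.arctan y / 2), Real.sin (Real.arctan y / 2), by
      rw [add_comm]; exact Real.sin_sq_add_cos_sq _, ?_⟩
    have hs : Real.sin (Real.arctan y) =
        2 * Real.sin (Real.arctan y / 2) * Real.cos (Real.arctan y / 2) := by
      rw [← Real.sin_two_mul]; ring_nf
    have hc : Real.cos (Real.arctan y) =
        Real.cos (Real.arctan y / 2) ^ 2 - Real.sin (Real.arctan y / 2) ^ 2 := by
      rw [← Real.cos_two_mul']; ring_nf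
    rw [hy] at h1
    rw [hs, hc] at h1
    field_simp at h1
    nlinarith [h1]
  · intro l m h1 h2
    have h1c : (l : ℂ) ^ 2 + (m : ℂ) ^ 2 = 1 := by exact_mod_cast h1
    have h2c : (l : ℂ) * m * (a - b) = x * ((l : ℂ) ^ 2 - (m : ℂ) ^ 2) := by
      exact_mod_cast h2
    have hD : !![-(l : ℂ), Complex.I * m; -(Complex.I * m), (l : ℂ)] *
        !![-(l : ℂ), Complex.I * m; -(Complex.I * m), (l : ℂ)] = 1 := by
      ext i j
      fin_cases i <;> fin_cases j <;>
        simp [Matrix.mul_apply, Fin.sum_univ_succ, Matrix.one_apply] <;>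
        first
          | linear_combination -(m:ℂ)^2 * Complex.I_sq + h1c
          | ring
    rw [Matrix.inv_eq_right_inv hD]
    ext i j
    fin_cases i <;> fin_cases j <;>
      simp [Matrix.mul_apply, Fin.sum_univ_succ] <;> push_cast
    · linear_combination (-Complex.I*(m:ℂ)^2*b) * Complex.I_sq
    · linear_combination ((-(l:ℂ)*a*m + l*m*b - m^2*x)) * Complex.I_sq + h2c
    · linear_combination (((m:ℂ)*a*l - m*l*b + m^2*x)) * Complex.I_sq - h2c
    · linear_combination (-Complex.I*(m:ℂ)^2*a) * Complex.I_sq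
end

section
/- Let κ > 0, τ ≠ 0, H ≥ 0 and E be real numbers, and let p(t) = (1 + 4H²/κ)t² − (1 − 8HE/κ)t + 4E²/κ. If there exists t ∈ [0,1] with p(t) ≤ 0, then −H − (1/2)√(4H² + κ) ≤ 2E ≤ −H + (1/2)√(4H² + κ). -/
/-- Energy restriction for rotationally invariant CMC surfaces in the Berger
sphere: if `p(t) = (1 + 4H²/κ)t² − (1 − 8HE/κ)t + 4E²/κ` is nonpositive at
some `t ∈ [0,1]`, then `−H − ½√(4H²+κ) ≤ 2E ≤ −H + ½√(4H²+κ)`. -/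
theorem energy_bounds_berger (κ τ H E : ℝ) (hκ : 0 < κ) (hτ : τ ≠ 0) (hH : 0 ≤ H)
    (hex : ∃ t ∈ Set.Icc (0 : ℝ) 1,
      (1 + 4 * H ^ 2 / κ) * t ^ 2 - (1 - 8 * H * E / κ) * t + 4 * E ^ 2 / κ ≤ 0) :
    -H - (1 / 2) * Real.sqrt (4 * H ^ 2 + κ) ≤ 2 * E ∧
      2 * E ≤ -H + (1 / 2) * Real.sqrt (4 * H ^ 2 + κ) := by
  obtain ⟨t, _, hpt⟩ := hex
  -- clear denominators: q(t) = (κ+4H²)t² − (κ−8HE)t + 4E² ≤ 0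
  have hq : (κ + 4 * H ^ 2) * t ^ 2 - (κ - 8 * H * E) * t + 4 * E ^ 2 ≤ 0 := by
    have := mul_le_mul_of_nonneg_left hpt hκ.le
    field_simp at this
    nlinarith [this]
  -- discriminant nonneg ⇒ 16E² + 16HE ≤ κ
  have key : 16 * E ^ 2 + 16 * H * E ≤ κ := by
    have h1 : (0:ℝ) ≤ (2 * (κ + 4 * H ^ 2) * t - (κ - 8 * H * E)) ^ 2 := sq_nonneg _
    have h2 : 0 < κ + 4 * H ^ 2 := by positivity
    nlinarith [mul_le_mul_of_nonneg_left hq h2.le, mul_pos hκ h2]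
  set s := Real.sqrt (4 * H ^ 2 + κ) with hs
  have hs0 : 0 ≤ s := Real.sqrt_nonneg _
  have hs2 : s ^ 2 = 4 * H ^ 2 + κ := Real.sq_sqrt (by positivity)
  constructor
  · nlinarith [sq_nonneg (2 * E + H + s / 2), sq_nonneg (2 * E + H - s / 2)]
  · nlinarith [sq_nonneg (2 * E + H + s / 2), sq_nonneg (2 * E + H - s / 2)]
end

section
/- Let κ, τ, H > 0 with κ − 4τ² < 0, and for x ∈ [0, arctan(√κ/(2H))] define λ(x) = √(1 − (4H²/κ)tan²x)/√(1 + (4τ²/κ)tan²x) and y(x) = −arctan((τ/H)λ(x)) + (H/τ)·(√(4τ²−κ)/√(4H²+κ))·arctan((√(4τ²−κ)/√(4H²+κ))λ(x)). Then y'(x) = (H/τ) tan x · √(1 + (4τ²/κ)tan²x)/√(1 − (4H²/κ)tan²x) for x in the open interval, and y(arctan(√κ/(2H))) = 0. -/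
/-!
Write `y = Y ∘ tan` with `Y(t) = -arctan (p λ t) + (q / p) arctan (q λ t)`, where
`p = τ / H`, `q² = (4τ² - κ) / (4H² + κ)` and `λ t = √(1 - a t²) / √(1 + b t²)`,
`a = 4H² / κ`, `b = 4τ² / κ`. The chain rule gives `Y' = λ' (q² - p²) / (p (1 + p²λ²) (1 + q²λ²))`,
and since `H² b = τ² a` both `1 + p²λ²` and `1 + q²λ²` collapse to multiples of
`1 / (1 + b t²)`, which leaves `Y'(t) = (H / τ) t √(1 + b t²) / (√(1 - a t²) (1 + t²))`;
the factor `1 + t²` is cancelled by `tan' = 1 + tan²`.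
At `x = arctan (√κ / (2H))` we have `1 - a tan² x = 0`, so `λ = 0` and `y = 0`.
-/

open Real Set

theorem hasDerivAt_sqrt_one_sub_div_sqrt_one_add {a b t : ℝ} (hP : 0 < 1 - a * t ^ 2)
    (hQ : 0 < 1 + b * t ^ 2) :
    HasDerivAt (fun t => √(1 - a * t ^ 2) / √(1 + b * t ^ 2))
      (-((a + b) * t) / (√(1 - a * t ^ 2) * (1 + b * t ^ 2) * √(1 + b * t ^ 2))) t := by
  have hP' : HasDerivAt (fun t => 1 - a * t ^ 2) (-(a * (2 * t))) t := by
    simpa using ((hasDerivAt_pow 2 t).const_mul a).const_sub 1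
  have hQ' : HasDerivAt (fun t => 1 + b * t ^ 2) (b * (2 * t)) t := by
    simpa using ((hasDerivAt_pow 2 t).const_mul b).const_add 1
  refine ((hP'.sqrt hP.ne').div (hQ'.sqrt hQ.ne') (sqrt_pos.2 hQ).ne').congr_deriv ?_
  have hsP := sqrt_pos.2 hP
  have hsQ := sqrt_pos.2 hQ
  have hP2 := sq_sqrt hP.le
  have hQ2 := sq_sqrt hQ.le
  generalize √(1 - a * t ^ 2) = sP at *
  generalize √(1 + b * t ^ 2) = sQ at *
  rw [← hQ2]
  field_simp
  linear_combination (-t * a) * hQ2 - (t * b) * hP2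

theorem hasDerivAt_neg_arctan_add_inv_mul_arctan {f : ℝ → ℝ} {f' p q t : ℝ}
    (hf : HasDerivAt f f' t) (hp : p ≠ 0) :
    HasDerivAt (fun t => -arctan (p * f t) + p⁻¹ * q * arctan (q * f t))
      (f' * (q ^ 2 - p ^ 2) / (p * (1 + (p * f t) ^ 2) * (1 + (q * f t) ^ 2))) t := by
  refine (((hf.const_mul p).arctan.neg).add
    ((hf.const_mul q).arctan.const_mul (p⁻¹ * q))).congr_deriv ?_
  field_simp
  ring

noncomputable def sphereProfileLambda (κ τ H t : ℝ) : ℝ :=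
  √(1 - 4 * H ^ 2 / κ * t ^ 2) / √(1 + 4 * τ ^ 2 / κ * t ^ 2)

noncomputable def sphereProfile (κ τ H t : ℝ) : ℝ :=
  -arctan (τ / H * sphereProfileLambda κ τ H t) +
    H / τ * (√(4 * τ ^ 2 - κ) / √(4 * H ^ 2 + κ)) *
      arctan (√(4 * τ ^ 2 - κ) / √(4 * H ^ 2 + κ) * sphereProfileLambda κ τ H t)

theorem hasDerivAt_sphereProfile {κ τ H t : ℝ} (hκ : 0 < κ) (hτ : τ ≠ 0) (hH : H ≠ 0)
    (hκτ : κ ≤ 4 * τ ^ 2) (hP : 0 < 1 - 4 * H ^ 2 / κ * t ^ 2) :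
    HasDerivAt (sphereProfile κ τ H)
      (H / τ * t * √(1 + 4 * τ ^ 2 / κ * t ^ 2) /
        (√(1 - 4 * H ^ 2 / κ * t ^ 2) * (1 + t ^ 2))) t := by
  have hQ : 0 < 1 + 4 * τ ^ 2 / κ * t ^ 2 := by positivity
  have hB : 0 < 4 * H ^ 2 + κ := by positivity
  have hlam : HasDerivAt (sphereProfileLambda κ τ H) _ t :=
    hasDerivAt_sqrt_one_sub_div_sqrt_one_add hP hQ
  have h := hasDerivAt_neg_arctan_add_inv_mul_arctan hlam (div_ne_zero hτ hH)
    (q := √(4 * τ ^ 2 - κ) / √(4 * H ^ 2 + κ))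
  rw [inv_div] at h
  refine h.congr_deriv ?_
  rw [sphereProfileLambda]
  have hP2 := sq_sqrt hP.le
  have hQ2 := sq_sqrt hQ.le
  have hA2 := sq_sqrt (sub_nonneg.2 hκτ)
  have hB2 := sq_sqrt hB.le
  have hsP := sqrt_pos.2 hP
  have hsQ := sqrt_pos.2 hQ
  have hsB := sqrt_pos.2 hB
  generalize √(1 - 4 * H ^ 2 / κ * t ^ 2) = sP at *
  generalize √(1 + 4 * τ ^ 2 / κ * t ^ 2) = sQ at *
  generalize √(4 * τ ^ 2 - κ) = sA at *
  generalize √(4 * H ^ 2 + κ) = sB at *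
  have hp : 1 + (τ / H * (sP / sQ)) ^ 2 = (H ^ 2 + τ ^ 2) / (H ^ 2 * sQ ^ 2) := by
    field_simp
    rw [hP2, hQ2]
    field_simp
    ring
  have hq : 1 + (sA / sB * (sP / sQ)) ^ 2 =
      4 * (H ^ 2 + τ ^ 2) * (1 + t ^ 2) / (sB ^ 2 * sQ ^ 2) := by
    field_simp
    rw [hP2, hQ2, hA2, hB2]
    field_simp
    ring
  have hqp : (sA / sB) ^ 2 - (τ / H) ^ 2 = -(κ * (H ^ 2 + τ ^ 2)) / (H ^ 2 * sB ^ 2) := by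
    rw [div_pow, hA2, hB2]
    field_simp
    ring
  rw [hp, hq, hqp, ← hQ2]
  field_simp

theorem tan_lt_iff_lt_arctan {x c : ℝ} (hx : x ∈ Ioo (-(π / 2)) (π / 2)) :
    tan x < c ↔ x < arctan c := by
  rw [← arctan_lt_arctan_iff, arctan_tan hx.1 hx.2]

theorem one_sub_four_mul_sq_div_mul_sq_pos {κ H t : ℝ} (hκ : 0 < κ) (hH : 0 < H) (ht : 0 ≤ t)
    (htc : t < √κ / (2 * H)) : 0 < 1 - 4 * H ^ 2 / κ * t ^ 2 := by
  have h : (2 * H * t) ^ 2 < κ := by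
    rw [← lt_sqrt (by positivity), ← lt_div_iff₀' (by positivity)]
    exact htc
  rw [sub_pos, div_mul_eq_mul_div, div_lt_one hκ]
  linarith

/-- Explicit profile of the CMC `H` sphere in the Berger sphere with
`4τ² > κ`: its derivative on the open interval and its boundary value. -/
theorem profile_sphere_berger (κ τ H : ℝ) (hκ : 0 < κ) (hτ : 0 < τ) (hH : 0 < H)
    (hκτ : κ - 4 * τ ^ 2 < 0)
    (lam y : ℝ → ℝ)
    (hlam : ∀ x, lam x = Real.sqrt (1 - (4 * H ^ 2 / κ) * Real.tan x ^ 2) /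
      Real.sqrt (1 + (4 * τ ^ 2 / κ) * Real.tan x ^ 2))
    (hy : ∀ x, y x = -Real.arctan ((τ / H) * lam x) +
      (H / τ) * (Real.sqrt (4 * τ ^ 2 - κ) / Real.sqrt (4 * H ^ 2 + κ)) *
        Real.arctan ((Real.sqrt (4 * τ ^ 2 - κ) / Real.sqrt (4 * H ^ 2 + κ)) * lam x)) :
    (∀ x ∈ Set.Ioo (0 : ℝ) (Real.arctan (Real.sqrt κ / (2 * H))),
      HasDerivAt y ((H / τ) * Real.tan x *
        Real.sqrt (1 + (4 * τ ^ 2 / κ) * Real.tan x ^ 2) /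
        Real.sqrt (1 - (4 * H ^ 2 / κ) * Real.tan x ^ 2)) x) ∧
    y (Real.arctan (Real.sqrt κ / (2 * H))) = 0 := by
  constructor
  · intro x hx
    have hx' : x ∈ Ioo (-(π / 2)) (π / 2) :=
      ⟨by linarith [pi_pos, hx.1], hx.2.trans (arctan_lt_pi_div_two _)⟩
    have hcos : cos x ≠ 0 := (cos_pos_of_mem_Ioo hx').ne'
    have hP := one_sub_four_mul_sq_div_mul_sq_pos hκ hH
      (tan_pos_of_pos_of_lt_pi_div_two hx.1 hx'.2).le ((tan_lt_iff_lt_arctan hx').2 hx.2)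
    have hyt : y = sphereProfile κ τ H ∘ tan := funext fun x => by
      rw [hy, hlam]
      rfl
    rw [hyt]
    refine ((hasDerivAt_sphereProfile hκ hτ.ne' hH.ne' (by linarith) hP).comp x
      (hasDerivAt_tan hcos)).congr_deriv ?_
    rw [← inv_one_add_tan_sq hcos]
    field_simp
  · have h0 : 1 - 4 * H ^ 2 / κ * (√κ / (2 * H)) ^ 2 = 0 := by
      rw [div_pow, sq_sqrt hκ.le]
      field_simp
      ring
    rw [hy, hlam, tan_arctan, h0, sqrt_zero, zero_div, mul_zero, mul_zero, arctan_zero]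
    ring
end

section
/- Let κ, τ, H > 0 with κ − 4τ² > 0 and 4H² + κ > κ − 4τ² (equivalently 4H² + 4τ² > 0, which always holds). For x ∈ [0, arctan(√κ/(2H))] define λ(x) = √(1 − (4H²/κ)tan²x)/√(1 + (4τ²/κ)tan²x) and y(x) = −arctan((τ/H)λ(x)) − (H/τ)·(√(κ−4τ²)/√(4H²+κ))·artanh((√(κ−4τ²)/√(4H²+κ))λ(x)). Then for x in the open interval y'(x) = (H/τ) tan x · √(1 + (4τ²/κ)tan²x)/√(1 − (4H²/κ)tan²x). -/
/-!
Write `t = tan x`, `a = 4H²/κ`, `b = 4τ²/κ`, `p = τ/H` and `c² = (κ - 4τ²)/(4H² + κ)`, so that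
`y = -arctan (p λ) - p⁻¹ c artanh (c λ)` with `λ² = (1 - a t²)/(1 + b t²)`. The two relations
`p² a = b` and `c² (1 + a) = 1 - b` make both denominators of `dy/dλ` factor,
`1 + p² λ² = (a + b)/(a (1 + b t²))` and `1 - c² λ² = (a + b)(1 + t²)/((1 + a)(1 + b t²))`,
after which the chain rule through `λ` and `tan` collapses to the claimed derivative.
-/

open Real

/-- The inverse hyperbolic tangent. -/
noncomputable def artanh (x : ℝ) : ℝ := (1 / 2) * Real.log ((1 + x) / (1 - x))

theorem hasDerivAt_artanh {x : ℝ} (hx : x ^ 2 < 1) :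
    HasDerivAt _root_.artanh (1 - x ^ 2)⁻¹ x := by
  have hx₁ : 0 < 1 + x := by nlinarith
  have hx₂ : 0 < 1 - x := by nlinarith
  have hquot : HasDerivAt (fun x => (1 + x) / (1 - x))
      ((1 * (1 - x) - (1 + x) * -1) / (1 - x) ^ 2) x :=
    ((hasDerivAt_id x).const_add 1).div ((hasDerivAt_id x).const_sub 1) hx₂.ne'
  refine ((hquot.log (div_pos hx₁ hx₂).ne').const_mul (1 / 2 : ℝ)).congr_deriv ?_
  have : 1 - x ^ 2 ≠ 0 := by nlinarith
  field_simp
  ring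

theorem Real.hasDerivAt_tan_eq_one_add_tan_sq {x : ℝ} (hx : cos x ≠ 0) :
    HasDerivAt tan (1 + tan x ^ 2) x := by
  simpa only [one_div, ← inv_one_add_tan_sq hx, inv_inv] using hasDerivAt_tan hx

/-- The ratio `λ = √(1 - a t²) / √(1 + b t²)` as a function of `t = tan x`. -/
noncomputable def profileRatio (a b t : ℝ) : ℝ := √(1 - a * t ^ 2) / √(1 + b * t ^ 2)

theorem hasDerivAt_profileRatio {a b t : ℝ} (ha : 0 < 1 - a * t ^ 2) (hb : 0 < 1 + b * t ^ 2) :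
    HasDerivAt (profileRatio a b)
      (-((a + b) * t) / (√(1 - a * t ^ 2) * √(1 + b * t ^ 2) ^ 3)) t := by
  have hsq (k : ℝ) : HasDerivAt (fun t => k * t ^ 2) (k * (2 * t)) t := by
    simpa using (hasDerivAt_pow 2 t).const_mul k
  have hnum := ((hsq a).const_sub 1).sqrt ha.ne'
  have hden := ((hsq b).const_add 1).sqrt hb.ne'
  refine (hnum.div hden (sqrt_pos.2 hb).ne').congr_deriv ?_
  have hs := sq_sqrt ha.le
  have hr := sq_sqrt hb.le
  have hs₀ := sqrt_pos.2 ha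
  have hr₀ := sqrt_pos.2 hb
  set s := √(1 - a * t ^ 2)
  set r := √(1 + b * t ^ 2)
  field_simp
  linear_combination (-t * a) * hr - t * b * hs

/-- The profile `y` of the paper as a function of `λ`, with `p = τ / H`. -/
noncomputable def profile (p c l : ℝ) : ℝ := -arctan (p * l) - p⁻¹ * c * _root_.artanh (c * l)

theorem hasDerivAt_profile {p c l : ℝ} (hl : (c * l) ^ 2 < 1) :
    HasDerivAt (profile p c) (-(p / (1 + (p * l) ^ 2) + p⁻¹ * c ^ 2 / (1 - (c * l) ^ 2))) l := by
  have harctan := (((hasDerivAt_id l).const_mul p).arctan).neg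
  have hartanh := ((hasDerivAt_artanh hl).comp l ((hasDerivAt_id l).const_mul c)).const_mul
    (p⁻¹ * c)
  refine (harctan.sub hartanh).congr_deriv ?_
  simp only [id, mul_one]
  ring

theorem profile_deriv_mul_profileRatio_deriv {a b p c s r t : ℝ} (ha : 0 < a) (hp : p ≠ 0)
    (hb : p ^ 2 * a = b) (hc : c ^ 2 * (1 + a) = 1 - b) (hs : 0 < s) (hr : 0 < r)
    (hs2 : s ^ 2 = 1 - a * t ^ 2) (hr2 : r ^ 2 = 1 + b * t ^ 2) :
    -(p / (1 + (p * (s / r)) ^ 2) + p⁻¹ * c ^ 2 / (1 - (c * (s / r)) ^ 2)) *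
        (-((a + b) * t) / (s * r ^ 3) * (1 + t ^ 2)) = p⁻¹ * t * r / s := by
  have hab : 0 < a + b := by nlinarith [sq_nonneg p]
  have harctan_denom : 1 + (p * (s / r)) ^ 2 = (a + b) / (a * r ^ 2) := by
    field_simp
    linear_combination a * hr2 + a * p ^ 2 * hs2 + (1 - a * t ^ 2) * hb
  have hartanh_denom : 1 - (c * (s / r)) ^ 2 = (a + b) * (1 + t ^ 2) / ((1 + a) * r ^ 2) := by
    field_simp
    linear_combination (1 + a) * hr2 - c ^ 2 * (1 + a) * hs2 - (1 - a * t ^ 2) * hc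
  rw [harctan_denom, hartanh_denom]
  field_simp
  linear_combination t * (1 + t ^ 2) * hb + t * hc - t * hr2

theorem hasDerivAt_profile_profileRatio_tan {a b p c x : ℝ} (ha : 0 < a) (hp : p ≠ 0)
    (hb : p ^ 2 * a = b) (hc : c ^ 2 * (1 + a) = 1 - b) (hx : cos x ≠ 0)
    (hax : 0 < 1 - a * tan x ^ 2) :
    HasDerivAt (fun x => profile p c (profileRatio a b (tan x)))
      (p⁻¹ * tan x * √(1 + b * tan x ^ 2) / √(1 - a * tan x ^ 2)) x := by
  set t := tan x
  have hbx : 0 < 1 + b * t ^ 2 := by rw [← hb]; positivity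
  have hs := sqrt_pos.2 hax
  have hr := sqrt_pos.2 hbx
  have hs2 := sq_sqrt hax.le
  have hr2 := sq_sqrt hbx.le
  have hcl : (c * profileRatio a b t) ^ 2 < 1 := by
    have hc1 : c ^ 2 < 1 := by nlinarith [sq_nonneg p]
    rw [profileRatio, mul_pow, div_pow, hs2, hr2, mul_div_assoc',
      div_lt_one hbx]
    nlinarith [sq_nonneg c, sq_nonneg t, sq_nonneg p]
  refine ((hasDerivAt_profile hcl).comp x ((hasDerivAt_profileRatio hax hbx).comp x
    (hasDerivAt_tan_eq_one_add_tan_sq hx))).congr_deriv ?_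
  exact profile_deriv_mul_profileRatio_deriv ha hp hb hc hs hr hs2 hr2

theorem profile_sphere_berger_artanh_general (κ τ H : ℝ) (hκ : 0 < κ) (hτ : 0 < τ)
    (hH : 0 < H) (hκτ : 0 < κ - 4 * τ ^ 2)
    (lam y : ℝ → ℝ)
    (hlam : ∀ x, lam x = Real.sqrt (1 - (4 * H ^ 2 / κ) * Real.tan x ^ 2) /
      Real.sqrt (1 + (4 * τ ^ 2 / κ) * Real.tan x ^ 2))
    (hy : ∀ x, y x = -Real.arctan ((τ / H) * lam x) -
      (H / τ) * (Real.sqrt (κ - 4 * τ ^ 2) / Real.sqrt (4 * H ^ 2 + κ)) *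
        _root_.artanh ((Real.sqrt (κ - 4 * τ ^ 2) / Real.sqrt (4 * H ^ 2 + κ)) * lam x)) :
    ∀ x ∈ Set.Ioo (0 : ℝ) (Real.arctan (Real.sqrt κ / (2 * H))),
      HasDerivAt y ((H / τ) * Real.tan x *
        Real.sqrt (1 + (4 * τ ^ 2 / κ) * Real.tan x ^ 2) /
        Real.sqrt (1 - (4 * H ^ 2 / κ) * Real.tan x ^ 2)) x := by
  rintro x ⟨hx₀, hx₁⟩
  set c := √(κ - 4 * τ ^ 2) / √(4 * H ^ 2 + κ)
  have hy_eq : y = fun x =>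
      profile (τ / H) c (profileRatio (4 * H ^ 2 / κ) (4 * τ ^ 2 / κ) (tan x)) := by
    funext x
    simp only [hy, hlam, profile, profileRatio, inv_div]
  have hxπ : x < π / 2 := hx₁.trans (arctan_lt_pi_div_two _)
  have htan : 0 < tan x := tan_pos_of_pos_of_lt_pi_div_two hx₀ hxπ
  have htan_lt : tan x < √κ / (2 * H) := by
    simpa only [tan_arctan] using tan_lt_tan_of_lt_of_lt_pi_div_two (by linarith [pi_pos])
      (arctan_lt_pi_div_two _) hx₁
  have hax : 0 < 1 - 4 * H ^ 2 / κ * tan x ^ 2 := by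
    rw [lt_div_iff₀ (by positivity)] at htan_lt
    have := pow_lt_pow_left₀ htan_lt (by positivity) two_ne_zero
    rw [sub_pos, div_mul_eq_mul_div, div_lt_one hκ]
    nlinarith [sq_sqrt hκ.le]
  have hb : (τ / H) ^ 2 * (4 * H ^ 2 / κ) = 4 * τ ^ 2 / κ := by field_simp
  have hc : c ^ 2 * (1 + 4 * H ^ 2 / κ) = 1 - 4 * τ ^ 2 / κ := by
    rw [div_pow, sq_sqrt hκτ.le, sq_sqrt (by positivity)]
    field_simp
    ring
  rw [hy_eq, ← inv_div τ H]
  exact hasDerivAt_profile_profileRatio_tan (by positivity) (by positivity) hb hc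
    (cos_pos_of_mem_Ioo ⟨by linarith [pi_pos], hxπ⟩).ne' hax

/-- Explicit profile of the CMC `H` sphere in the Berger sphere with
`κ − 4τ² > 0`: its derivative on the open interval. -/
theorem profile_sphere_berger_artanh (κ τ H : ℝ) (hκ : 0 < κ) (hτ : 0 < τ)
    (hH : 0 < H) (hκτ : 0 < κ - 4 * τ ^ 2)
    (hlt : κ - 4 * τ ^ 2 < 4 * H ^ 2 + κ)
    (lam y : ℝ → ℝ)
    (hlam : ∀ x, lam x = Real.sqrt (1 - (4 * H ^ 2 / κ) * Real.tan x ^ 2) /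
      Real.sqrt (1 + (4 * τ ^ 2 / κ) * Real.tan x ^ 2))
    (hy : ∀ x, y x = -Real.arctan ((τ / H) * lam x) -
      (H / τ) * (Real.sqrt (κ - 4 * τ ^ 2) / Real.sqrt (4 * H ^ 2 + κ)) *
        _root_.artanh ((Real.sqrt (κ - 4 * τ ^ 2) / Real.sqrt (4 * H ^ 2 + κ)) * lam x)) :
    ∀ x ∈ Set.Ioo (0 : ℝ) (Real.arctan (Real.sqrt κ / (2 * H))),
      HasDerivAt y ((H / τ) * Real.tan x *
        Real.sqrt (1 + (4 * τ ^ 2 / κ) * Real.tan x ^ 2) /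
        Real.sqrt (1 - (4 * H ^ 2 / κ) * Real.tan x ^ 2)) x :=
  profile_sphere_berger_artanh_general κ τ H hκ hτ hH hκτ lam y hlam hy
end

section
/- Let κ < 0, τ ≠ 0 and H > 0 with 4H² + κ > 0. For x ∈ (−arctanh(√(−κ)/(2H)), 0), define ρ(x) = √(1 + (4H²/κ)tanh²x)/√(1 − (4τ²/κ)tanh²x) and y(x) = arctan((τ/H)ρ(x)) − (H/τ)·(√(4τ²−κ)/√(4H²+κ))·arctan((√(4τ²−κ)/√(4H²+κ))ρ(x)). Then y'(x) = H tanh x · √(1 − (4τ²/κ)tanh²x) / (τ √(1 + (4H²/κ)tanh²x)). -/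
open Real hiding artanh
open Set

namespace Real

theorem hasDerivAt_tanh (x : ℝ) : HasDerivAt tanh (1 - tanh x ^ 2) x := by
  rw [show tanh = fun y => sinh y / cosh y from funext tanh_eq_sinh_div_cosh]
  refine ((hasDerivAt_sinh x).div (hasDerivAt_cosh x) (cosh_pos x).ne').congr_deriv ?_
  field_simp

theorem tanh_strictMono : StrictMono tanh := fun a b hab => by
  rwa [← artanh_lt_artanh_iff ⟨neg_one_lt_tanh a, tanh_lt_one a⟩ ⟨neg_one_lt_tanh b, tanh_lt_one b⟩,
    artanh_tanh, artanh_tanh]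

end Real

theorem tanh_mem_Ioo_of_mem_Ioo_neg_artanh {s x : ℝ} (hs : s ∈ Ico 0 1)
    (hx : x ∈ Ioo (-artanh s) 0) : tanh x ∈ Ioo (-s) 0 := by
  have hartanh : artanh s = Real.artanh s :=
    (artanh_eq_half_log ⟨by linarith [hs.1], hs.2.le⟩).symm
  have htanh : tanh (-artanh s) = -s := by
    rw [tanh_neg, hartanh, tanh_artanh ⟨by linarith [hs.1], hs.2⟩]
  refine ⟨htanh ▸ tanh_strictMono hx.1, ?_⟩
  simpa using tanh_strictMono hx.2

theorem one_add_four_sq_div_mul_sq_pos {κ H t : ℝ} (hκ : κ < 0) (hH : 0 < H)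
    (ht : t ∈ Ioo (-(√(-κ) / (2 * H))) 0) : 0 < 1 + 4 * H ^ 2 / κ * t ^ 2 := by
  have h2Ht : 2 * H * -t < √(-κ) := by
    have := ht.1
    rw [neg_lt, lt_div_iff₀ (by positivity)] at this
    linarith
  have hsq : (2 * H * -t) ^ 2 < -κ := by
    calc (2 * H * -t) ^ 2 < √(-κ) ^ 2 := by gcongr; nlinarith [ht.2]
      _ = -κ := sq_sqrt (by linarith)
  rw [show 1 + 4 * H ^ 2 / κ * t ^ 2 = (κ + (2 * H * -t) ^ 2) / κ by field_simp [hκ.ne]; ring]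
  exact div_pos_of_neg_of_neg (by linarith) hκ

theorem hasDerivAt_arctan_mul_sub_arctan_mul {a : ℝ} (c s : ℝ) (ha : a ≠ 0) :
    HasDerivAt (fun s => arctan (a * s) - a⁻¹ * c * arctan (c * s))
      ((a ^ 2 - c ^ 2) / (a * (1 + (a * s) ^ 2) * (1 + (c * s) ^ 2))) s := by
  have ha' := ((hasDerivAt_id' s).const_mul a).arctan
  have hc' := (((hasDerivAt_id' s).const_mul c).arctan).const_mul (a⁻¹ * c)
  refine (ha'.sub hc').congr_deriv ?_
  field_simp
  ring

theorem hasDerivAt_sqrt_div_sqrt {p q t : ℝ} (hP : 0 < 1 + p * t ^ 2) (hQ : 0 < 1 - q * t ^ 2) :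
    HasDerivAt (fun t => √(1 + p * t ^ 2) / √(1 - q * t ^ 2))
      ((p + q) * t / (√(1 + p * t ^ 2) * √(1 - q * t ^ 2) ^ 3)) t := by
  have hdP := (((hasDerivAt_pow 2 t).const_mul p).const_add 1).sqrt hP.ne'
  have hdQ := (((hasDerivAt_pow 2 t).const_mul q).const_sub 1).sqrt hQ.ne'
  refine (hdP.div hdQ (sqrt_pos.2 hQ).ne').congr_deriv ?_
  have hX2 := sq_sqrt hP.le
  have hY2 := sq_sqrt hQ.le
  set X := √(1 + p * t ^ 2)
  set Y := √(1 - q * t ^ 2)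
  have hX : X ≠ 0 := (sqrt_pos.2 hP).ne'
  have hY : Y ≠ 0 := (sqrt_pos.2 hQ).ne'
  field_simp
  linear_combination (2 * p * t) * hY2 + (2 * q * t) * hX2

theorem profile_chain_rule_eq {κ τ H t X Y A B : ℝ} (hκ : κ ≠ 0) (hτ : τ ≠ 0) (hH : H ≠ 0)
    (hX : X ≠ 0) (hY : Y ≠ 0) (hB : B ≠ 0) (ht : t ^ 2 < 1)
    (hX2 : X ^ 2 = 1 + 4 * H ^ 2 / κ * t ^ 2) (hY2 : Y ^ 2 = 1 - 4 * τ ^ 2 / κ * t ^ 2)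
    (hA2 : A ^ 2 = 4 * τ ^ 2 - κ) (hB2 : B ^ 2 = 4 * H ^ 2 + κ) :
    ((τ / H) ^ 2 - (A / B) ^ 2) /
        (τ / H * (1 + (τ / H * (X / Y)) ^ 2) * (1 + (A / B * (X / Y)) ^ 2)) *
      ((4 * H ^ 2 / κ + 4 * τ ^ 2 / κ) * t / (X * Y ^ 3) * (1 - t ^ 2)) =
      H * t * Y / (τ * X) := by
  have hHτ : H ^ 2 + τ ^ 2 ≠ 0 := by positivity
  have ht' : 1 - t ^ 2 ≠ 0 := by linarith
  have hκX : κ * X ^ 2 = κ + 4 * H ^ 2 * t ^ 2 := by rw [hX2]; field_simp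
  have hκY : κ * Y ^ 2 = κ - 4 * τ ^ 2 * t ^ 2 := by rw [hY2]; field_simp
  have e1 : 1 + (τ / H * (X / Y)) ^ 2 = (H ^ 2 + τ ^ 2) / (H ^ 2 * Y ^ 2) := by
    field_simp
    linear_combination τ ^ 2 * hX2 + H ^ 2 * hY2
  have e2 : 1 + (A / B * (X / Y)) ^ 2 = 4 * (H ^ 2 + τ ^ 2) * (1 - t ^ 2) / (B ^ 2 * Y ^ 2) := by
    field_simp
    rw [hA2, hB2]
    apply mul_left_cancel₀ hκ
    linear_combination (4 * τ ^ 2 - κ) * hκX + (4 * H ^ 2 + κ) * hκY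
  have e3 : (τ / H) ^ 2 - (A / B) ^ 2 = κ * (H ^ 2 + τ ^ 2) / (H ^ 2 * B ^ 2) := by
    field_simp
    linear_combination τ ^ 2 * hB2 - H ^ 2 * hA2
  rw [e1, e2, e3]
  field_simp

/-- Explicit profile of the CMC `H` sphere in `Sl(2,ℝ)` with `4H² + κ > 0`:
its derivative on the interval `(−artanh(√(−κ)/(2H)), 0)`. -/
theorem profile_sphere_sl2 (κ τ H : ℝ) (hκ : κ < 0) (hτ : τ ≠ 0) (hH : 0 < H)
    (hHκ : 0 < 4 * H ^ 2 + κ)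
    (ρ y : ℝ → ℝ)
    (hρ : ∀ x, ρ x = Real.sqrt (1 + (4 * H ^ 2 / κ) * Real.tanh x ^ 2) /
      Real.sqrt (1 - (4 * τ ^ 2 / κ) * Real.tanh x ^ 2))
    (hy : ∀ x, y x = Real.arctan ((τ / H) * ρ x) -
      (H / τ) * (Real.sqrt (4 * τ ^ 2 - κ) / Real.sqrt (4 * H ^ 2 + κ)) *
        Real.arctan ((Real.sqrt (4 * τ ^ 2 - κ) / Real.sqrt (4 * H ^ 2 + κ)) * ρ x)) :
    ∀ x ∈ Set.Ioo (-(artanh (Real.sqrt (-κ) / (2 * H)))) (0 : ℝ),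
      HasDerivAt y
        (H * Real.tanh x * Real.sqrt (1 - (4 * τ ^ 2 / κ) * Real.tanh x ^ 2) /
          (τ * Real.sqrt (1 + (4 * H ^ 2 / κ) * Real.tanh x ^ 2))) x := by
  intro x hx
  have hs : √(-κ) / (2 * H) ∈ Ico 0 1 :=
    ⟨by positivity, (div_lt_one (by positivity)).2 ((sqrt_lt' (by positivity)).2 (by linarith))⟩
  have ht := tanh_mem_Ioo_of_mem_Ioo_neg_artanh hs hx
  have hP := one_add_four_sq_div_mul_sq_pos hκ hH ht
  have hQ : 0 < 1 - 4 * τ ^ 2 / κ * tanh x ^ 2 := by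
    have : 4 * τ ^ 2 / κ * tanh x ^ 2 ≤ 0 :=
      mul_nonpos_of_nonpos_of_nonneg (div_nonpos_of_nonneg_of_nonpos (by positivity) hκ.le)
        (sq_nonneg _)
    linarith
  set c := √(4 * τ ^ 2 - κ) / √(4 * H ^ 2 + κ)
  have hy_comp : y = (fun r => arctan (τ / H * r) - (τ / H)⁻¹ * c * arctan (c * r)) ∘
      (fun t => √(1 + 4 * H ^ 2 / κ * t ^ 2) / √(1 - 4 * τ ^ 2 / κ * t ^ 2)) ∘ tanh := by
    funext z
    simp only [Function.comp_apply, hy, hρ, inv_div]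
  rw [hy_comp]
  refine ((hasDerivAt_arctan_mul_sub_arctan_mul c _ (div_ne_zero hτ hH.ne')).comp x
    ((hasDerivAt_sqrt_div_sqrt hP hQ).comp x (hasDerivAt_tanh x))).congr_deriv ?_
  exact profile_chain_rule_eq hκ.ne hτ hH.ne' (sqrt_pos.2 hP).ne' (sqrt_pos.2 hQ).ne'
    (sqrt_pos.2 hHκ).ne' (tanh_sq_lt_one x) (sq_sqrt hP.le) (sq_sqrt hQ.le)
    (sq_sqrt (by linarith [sq_nonneg τ])) (sq_sqrt hHκ.le)
end
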